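/- arXiv:1702.03237 — 6 statements merged into one kernel-verified Lean document; each statement's English description precedes it below -/
import Mathlib

section
/- Let 1 ≤ m ≤ p and let W be an m-dimensional subspace of R^p. Then there exists an m-element subset J of {1,…,p} such that the sum of the squares of the sines of the m principal angles between W and the coordinate plane R^J is at most m(1 − m/p). -/
/-!
The squared row norms `d j = (W * Wᵀ) j j` of `W` sum to `tr (Wᵀ * W) = m`, while `∑ cos² φᵢ` is
the trace of `(Wᵀ E)(Wᵀ E)ᵀ` with `E = stdColMatrix J`, which is `∑_{j ∈ J} d j`. Choosing for `J`
the `m` indices with the largest `d j` makes this at least the average `m · m / p`, hence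
`∑ sin² φᵢ ≤ m - m² / p`.
-/

open Matrix Finset Polynomial Real

/-- The `p × |J|` matrix whose columns are the standard basis vectors indexed by `J`,
in increasing order. -/
def stdColMatrix {p : ℕ} (J : Finset (Fin p)) : Matrix (Fin p) (Fin J.card) ℝ :=
  fun i k => if (J.orderIsoOfFin rfl k : Fin p) = i then 1 else 0

theorem Finset.exists_card_eq_forall_le_of_notMem {ι α : Type*} [Fintype ι] [DecidableEq ι]
    [AddCommMonoid α] [LinearOrder α] [IsOrderedCancelAddMonoid α] {m : ℕ}
    (hm : m ≤ Fintype.card ι) (f : ι → α) :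
    ∃ J : Finset ι, J.card = m ∧ ∀ j ∈ J, ∀ j' ∉ J, f j' ≤ f j := by
  obtain ⟨J, hJ, hmax⟩ := exists_max_image (univ.powersetCard m) (fun J => ∑ j ∈ J, f j)
    (powersetCard_nonempty.mpr (by simpa using hm))
  rw [mem_powersetCard_univ] at hJ
  refine ⟨J, hJ, fun j hj j' hj' => ?_⟩
  have hj'_erase : j' ∉ J.erase j := fun h => hj' (mem_of_mem_erase h)
  have hswap : (insert j' (J.erase j)).card = m := by
    rw [card_insert_of_notMem hj'_erase, card_erase_add_one hj, hJ]
  have hle := hmax _ (mem_powersetCard_univ.mpr hswap)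
  rw [sum_insert hj'_erase, ← add_sum_erase J f hj] at hle
  exact le_of_add_le_add_right hle

theorem Finset.card_mul_sum_le_of_forall_le_of_notMem {ι 𝕜 : Type*} [Fintype ι] [DecidableEq ι]
    [CommRing 𝕜] [LinearOrder 𝕜] [IsStrictOrderedRing 𝕜] {J : Finset ι} {f : ι → 𝕜}
    (hf : ∀ j ∈ J, ∀ j' ∉ J, f j' ≤ f j) :
    J.card * ∑ i, f i ≤ Fintype.card ι * ∑ j ∈ J, f j := by
  have hcompl : (J.card : 𝕜) * ∑ j' ∈ Jᶜ, f j' ≤ Jᶜ.card * ∑ j ∈ J, f j :=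
    calc (J.card : 𝕜) * ∑ j' ∈ Jᶜ, f j' = ∑ j ∈ J, ∑ j' ∈ Jᶜ, f j' := by
          rw [sum_const, nsmul_eq_mul]
      _ ≤ ∑ j ∈ J, ∑ j' ∈ Jᶜ, f j :=
          sum_le_sum fun j hj => sum_le_sum fun j' hj' => hf j hj j' (mem_compl.mp hj')
      _ = Jᶜ.card * ∑ j ∈ J, f j := by
          rw [sum_comm, sum_const, nsmul_eq_mul]
  have hcard : (Fintype.card ι : 𝕜) = J.card + Jᶜ.card := by
    rw [← Nat.cast_add, card_add_card_compl]
  rw [← sum_add_sum_compl J f, hcard]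
  linarith

theorem Finset.exists_card_eq_div_mul_sum_le {ι 𝕜 : Type*} [Fintype ι] [DecidableEq ι]
    [Field 𝕜] [LinearOrder 𝕜] [IsStrictOrderedRing 𝕜] {m : ℕ}
    (hm : m ≤ Fintype.card ι) (f : ι → 𝕜) :
    ∃ J : Finset ι, J.card = m ∧ m / Fintype.card ι * ∑ i, f i ≤ ∑ j ∈ J, f j := by
  obtain ⟨J, hJ, hf⟩ := exists_card_eq_forall_le_of_notMem hm f
  refine ⟨J, hJ, ?_⟩
  rcases (Fintype.card ι).eq_zero_or_pos with hι | hι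
  · have : IsEmpty ι := Fintype.card_eq_zero_iff.mp hι
    simp [eq_empty_of_isEmpty J]
  · rw [div_mul_eq_mul_div, div_le_iff₀' (by exact_mod_cast hι), ← hJ]
    exact card_mul_sum_le_of_forall_le_of_notMem hf

theorem Matrix.trace_eq_sum_of_charpoly_eq_prod {n κ R : Type*} [Fintype n] [DecidableEq n]
    [Fintype κ] [CommRing R] [IsDomain R] {A : Matrix n n R} {a : κ → R}
    (h : A.charpoly = ∏ i, (X - C (a i))) : A.trace = ∑ i, a i := by
  rw [trace_eq_sum_roots_charpoly_of_splits (h ▸ Splits.prod fun i _ => Splits.X_sub_C (a i)), h,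
    prod_eq_multiset_prod, show (fun i => X - C (a i)) = (fun x => X - C x) ∘ a from rfl,
    ← Multiset.map_map, roots_multiset_prod_X_sub_C, sum_eq_multiset_sum]

theorem stdColMatrix_eq_submatrix {p : ℕ} (J : Finset (Fin p)) :
    stdColMatrix J = (1 : Matrix (Fin p) (Fin p) ℝ).submatrix id (J.orderEmbOfFin rfl) := by
  ext i k
  simp [stdColMatrix, one_apply, eq_comm]

theorem Finset.sum_orderEmbOfFin {ι M : Type*} [LinearOrder ι] [AddCommMonoid M] (s : Finset ι)
    (f : ι → M) : ∑ k, f (s.orderEmbOfFin rfl k) = ∑ i ∈ s, f i := by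
  conv_rhs => rw [← s.map_orderEmbOfFin_univ rfl, sum_map]
  rfl

theorem trace_mul_stdColMatrix_mul_transpose {n : Type*} [Fintype n] {p : ℕ}
    (M : Matrix n (Fin p) ℝ) (J : Finset (Fin p)) :
    trace ((M * stdColMatrix J) * (M * stdColMatrix J)ᵀ) = ∑ j ∈ J, (Mᵀ * M) j j := by
  rw [trace_mul_comm, stdColMatrix_eq_submatrix, ← Equiv.coe_refl, mul_submatrix_one,
    transpose_submatrix, ← submatrix_mul _ _ _ _ _ Function.bijective_id]
  simp only [trace, Matrix.diag, submatrix_apply]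
  exact sum_orderEmbOfFin J fun j => (Mᵀ * M) j j

theorem exists_coordinate_plane_sin_sq_bound_general (p m : ℕ) (hmp : m ≤ p)
    (W : Matrix (Fin p) (Fin m) ℝ) (hW : Wᵀ * W = 1) :
    ∃ J : Finset (Fin p), ∃ hJ : J.card = m,
      ∀ φ : Fin m → ℝ, (∀ i, φ i ∈ Set.Icc 0 (π / 2)) →
        Matrix.charpoly ((Wᵀ * stdColMatrix J) * (Wᵀ * stdColMatrix J)ᵀ)
          = ∏ i : Fin m, (X - C ((Real.cos (φ i)) ^ 2)) →
        ∑ i : Fin m, (Real.sin (φ i)) ^ 2 ≤ (m : ℝ) * (1 - (m : ℝ) / (p : ℝ)) := by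
  have htotal : ∑ j, (W * Wᵀ) j j = m := by
    rw [show ∑ j, (W * Wᵀ) j j = trace (W * Wᵀ) from rfl, trace_mul_comm, hW, trace_one,
      Fintype.card_fin]
  obtain ⟨J, hJ, hJsum⟩ := exists_card_eq_div_mul_sum_le (by simpa using hmp) fun j => (W * Wᵀ) j j
  refine ⟨J, hJ, fun φ _ hφ => ?_⟩
  have hcos : ∑ i, cos (φ i) ^ 2 = ∑ j ∈ J, (W * Wᵀ) j j := by
    rw [← trace_eq_sum_of_charpoly_eq_prod hφ, trace_mul_stdColMatrix_mul_transpose,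
      transpose_transpose]
  calc ∑ i, sin (φ i) ^ 2 = m - ∑ i, cos (φ i) ^ 2 := by
        simp [sin_sq, sum_sub_distrib]
    _ ≤ m * (1 - m / p) := by
        rw [Fintype.card_fin, htotal] at hJsum
        linarith

/-- Let `1 ≤ m ≤ p` and let `W` be an `m`-dimensional subspace of `ℝ^p`, given by a `p × m`
matrix `W̃` with orthonormal columns.  There is an `m`-element subset `J ⊆ {1,…,p}` such that
for any principal angles `φ₁,…,φ_m ∈ [0,π/2]` between `W` and the coordinate plane `ℝ^J`
(i.e. `cos φ₁,…,cos φ_m` are the singular values of `W̃ᵀ E_J`, encoded by the characteristic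
polynomial of `(W̃ᵀE_J)(W̃ᵀE_J)ᵀ` being `∏ᵢ (X − cos²φᵢ)`), one has
`∑ᵢ sin²φᵢ ≤ m(1 − m/p)`. -/
theorem exists_coordinate_plane_sin_sq_bound (p m : ℕ) (hm : 1 ≤ m) (hmp : m ≤ p)
    (W : Matrix (Fin p) (Fin m) ℝ) (hW : Wᵀ * W = 1) :
    ∃ J : Finset (Fin p), ∃ hJ : J.card = m,
      ∀ φ : Fin m → ℝ, (∀ i, φ i ∈ Set.Icc 0 (π / 2)) →
        Matrix.charpoly ((Wᵀ * stdColMatrix J) * (Wᵀ * stdColMatrix J)ᵀ)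
          = ∏ i : Fin m, (X - C ((Real.cos (φ i)) ^ 2)) →
        ∑ i : Fin m, (Real.sin (φ i)) ^ 2 ≤ (m : ℝ) * (1 - (m : ℝ) / (p : ℝ)) :=
  exists_coordinate_plane_sin_sq_bound_general p m hmp W hW
end

section
/- For all x with 0 < x ≤ 1, (π/2)² + (arccos x)² > 2·(arccos(x/√2))². -/
open Real

/-- For `0 < x ≤ 1`, `(π/2)² + (arccos x)² > 2·(arccos(x/√2))²`. -/
theorem halfpi_sq_add_arccos_sq_gt (x : ℝ) (hx0 : 0 < x) (hx1 : x ≤ 1) :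
    (π / 2) ^ 2 + (arccos x) ^ 2 > 2 * (arccos (x / Real.sqrt 2)) ^ 2 := by
  set b := arccos x with hb
  set θ := arccos (x / Real.sqrt 2) with hθ
  have hs2 : (1:ℝ) < Real.sqrt 2 := by
    nlinarith [Real.sq_sqrt (by norm_num : (2:ℝ) ≥ 0), Real.sqrt_nonneg 2]
  have hxs0 : 0 < x / Real.sqrt 2 := div_pos hx0 (by linarith)
  have hxs1 : x / Real.sqrt 2 ≤ 1 := by
    rw [div_le_one (by linarith)]; linarith
  have hb0 : 0 ≤ b := Real.arccos_nonneg x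
  have hblt : b < π / 2 := Real.arccos_lt_pi_div_two.2 hx0
  have hθ0 : 0 ≤ θ := Real.arccos_nonneg _
  have hθle : θ ≤ π / 2 := Real.arccos_le_pi_div_two.2 hxs0.le
  have hcosθ : Real.cos θ = x / Real.sqrt 2 :=
    Real.cos_arccos (by linarith) hxs1
  have hcos2θ : Real.cos (2 * θ) = x ^ 2 - 1 := by
    rw [Real.cos_two_mul, hcosθ, div_pow,
      Real.sq_sqrt (by norm_num : (0:ℝ) ≤ 2)]
    ring
  have hsinb : Real.sin b = Real.sqrt (1 - x ^ 2) :=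
    Real.sin_arccos x
  have ht0 : 0 ≤ Real.sqrt (1 - x ^ 2) := Real.sqrt_nonneg _
  have ht1 : Real.sqrt (1 - x ^ 2) ≤ 1 := by
    exact Real.sqrt_le_one.2 (by nlinarith)
  have htsq : Real.sqrt (1 - x ^ 2) ^ 2 = 1 - x ^ 2 :=
    Real.sq_sqrt (by nlinarith)
  have hcoscmp : Real.cos (π / 2 + b) ≤ Real.cos (2 * θ) := by
    have e : Real.cos (π / 2 + b) = - Real.sin b := by
      rw [Real.cos_add]; simp
    rw [e, hsinb, hcos2θ]
    nlinarith
  have hkey : 2 * θ ≤ π / 2 + b := by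
    by_contra h
    push_neg at h
    have := Real.strictAntiOn_cos ⟨by positivity, by linarith [Real.pi_pos]⟩
      ⟨by positivity, by linarith⟩ h
    linarith
  nlinarith [sq_nonneg (π / 2 - b), sq_nonneg (π / 2 + b - 2 * θ),
    mul_nonneg hθ0 (by linarith : (0:ℝ) ≤ π / 2 + b - 2 * θ)]
end

section
/- Let R ∈ SO(p) be an involution written in block form R = [[R₁, R₂],[R₂^T, R₄]] with R₁ of size (p−m)×(p−m) and R₄ of size m×m, 0 < m < p. For every λ ∈ (−1,1), if λ is an eigenvalue of R₁ with multiplicity k, then −λ is an eigenvalue of R₄ with multiplicity k, and vice versa; moreover, the map v ↦ R₂^T v is an isomorphism from the λ-eigenspace of R₁ onto the (−λ)-eigenspace of R₄. -/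
open Matrix

section pure
variable {n m : Type*} [Fintype n] [Fintype m] [DecidableEq n] [DecidableEq m]
variable {A : Matrix n n ℝ} {B : Matrix n m ℝ} {D : Matrix m m ℝ} {lam : ℝ}

lemma L1 (h2 : Bᵀ * A + D * Bᵀ = 0) {v : n → ℝ} (hv : A *ᵥ v = lam • v) :
    D *ᵥ (Bᵀ *ᵥ v) = (-lam) • (Bᵀ *ᵥ v) := by
  have h := congrArg (fun M => M *ᵥ v) h2
  simp only [Matrix.add_mulVec, Matrix.zero_mulVec, ← Matrix.mulVec_mulVec, hv,
    Matrix.mulVec_smul] at h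
  have := eq_neg_of_add_eq_zero_right h
  rw [this, neg_smul]

lemma L2 (h1 : A * A + B * Bᵀ = 1) (hlam : (1:ℝ) - lam ^ 2 ≠ 0) {v : n → ℝ}
    (hv : A *ᵥ v = lam • v) (h0 : Bᵀ *ᵥ v = 0) : v = 0 := by
  have h := congrArg (fun M => M *ᵥ v) h1
  simp only [Matrix.add_mulVec, Matrix.one_mulVec, ← Matrix.mulVec_mulVec, hv, h0,
    Matrix.mulVec_zero, Matrix.mulVec_smul, smul_smul, add_zero] at h
  have hv2 : lam ^ 2 • v = v := by rw [pow_two]; exact h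
  have h' : (1 - lam ^ 2) • v = 0 := by
    rw [sub_smul, one_smul, hv2, sub_self]
  rcases smul_eq_zero.mp h' with h'' | h''
  · exact absurd h'' hlam
  · exact h''

lemma L3 (h3 : A * B + B * D = 0) {w : m → ℝ} (hw : D *ᵥ w = (-lam) • w) :
    A *ᵥ (B *ᵥ w) = lam • (B *ᵥ w) := by
  have h := congrArg (fun M => M *ᵥ w) h3
  simp only [Matrix.add_mulVec, Matrix.zero_mulVec, ← Matrix.mulVec_mulVec, hw,
    Matrix.mulVec_smul, neg_smul] at h
  have := eq_neg_of_add_eq_zero_left h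
  rw [this, Matrix.mulVec_neg, neg_neg, Matrix.mulVec_smul]

lemma L4 (h4 : D * D + Bᵀ * B = 1) {w : m → ℝ} (hw : D *ᵥ w = (-lam) • w) :
    Bᵀ *ᵥ (B *ᵥ w) = ((1:ℝ) - lam ^ 2) • w := by
  have h := congrArg (fun M => M *ᵥ w) h4
  simp only [Matrix.add_mulVec, Matrix.one_mulVec, ← Matrix.mulVec_mulVec, hw,
    Matrix.mulVec_smul, smul_smul, neg_mul_neg] at h
  have : Bᵀ *ᵥ B *ᵥ w = w - (lam * lam) • w := by
    rw [eq_sub_iff_add_eq, add_comm, h]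
  rw [this, sub_smul, one_smul]; ring_nf

end pure

lemma mem_eig_iff {n : Type*} [Fintype n] [DecidableEq n] (M : Matrix n n ℝ) (μ : ℝ)
    (v : EuclideanSpace ℝ n) :
    v ∈ Module.End.eigenspace (Matrix.toEuclideanLin M) μ ↔
      M *ᵥ (WithLp.equiv 2 (n → ℝ) v) = μ • (WithLp.equiv 2 (n → ℝ) v) := by
  rw [Module.End.mem_eigenspace_iff, Matrix.toEuclideanLin_apply]
  constructor
  · intro h; have := congrArg (WithLp.equiv 2 (n → ℝ)) h; simpa using this
  · intro h; apply (WithLp.equiv 2 (n → ℝ)).injective; simpa using h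

lemma toEuclideanLin_apply' {n m : Type*} [Fintype n] [Fintype m] [DecidableEq n]
    (M : Matrix m n ℝ) (v : EuclideanSpace ℝ n) :
    WithLp.equiv 2 (m → ℝ) (Matrix.toEuclideanLin M v) = M *ᵥ (WithLp.equiv 2 (n → ℝ) v) := by
  rw [Matrix.toEuclideanLin_apply]; simp

lemma aux_pairing {n m : Type*} [Fintype n] [Fintype m] [DecidableEq n] [DecidableEq m]
    (A : Matrix n n ℝ) (B : Matrix n m ℝ) (D : Matrix m m ℝ)
    (h1 : A * A + B * Bᵀ = 1) (h2 : Bᵀ * A + D * Bᵀ = 0)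
    (h3 : A * B + B * D = 0) (h4 : D * D + Bᵀ * B = 1)
    (lam : ℝ) (hlam : (1:ℝ) - lam ^ 2 ≠ 0) :
    (Module.finrank ℝ ↥(Module.End.eigenspace (Matrix.toEuclideanLin A) lam)
      = Module.finrank ℝ ↥(Module.End.eigenspace (Matrix.toEuclideanLin D) (-lam))) ∧
    (Submodule.map (Matrix.toEuclideanLin Bᵀ)
        (Module.End.eigenspace (Matrix.toEuclideanLin A) lam)
      = Module.End.eigenspace (Matrix.toEuclideanLin D) (-lam)) ∧
    (∀ v ∈ Module.End.eigenspace (Matrix.toEuclideanLin A) lam,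
        Matrix.toEuclideanLin Bᵀ v = 0 → v = 0) := by
  set E₁ := Module.End.eigenspace (Matrix.toEuclideanLin A) lam with hE₁
  set E₄ := Module.End.eigenspace (Matrix.toEuclideanLin D) (-lam) with hE₄
  have hmap : ∀ v ∈ E₁, Matrix.toEuclideanLin Bᵀ v ∈ E₄ := by
    intro v hv
    rw [mem_eig_iff] at hv ⊢
    rw [toEuclideanLin_apply']
    exact L1 h2 hv
  have hinj : ∀ v ∈ E₁, Matrix.toEuclideanLin Bᵀ v = 0 → v = 0 := by
    intro v hv h0
    rw [mem_eig_iff] at hv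
    have h0' : Bᵀ *ᵥ (WithLp.equiv 2 (n → ℝ) v) = 0 := by
      rw [← toEuclideanLin_apply', h0]; simp
    have := L2 h1 hlam hv h0'
    apply (WithLp.equiv 2 (n → ℝ)).injective
    simpa using this
  have hsurj : ∀ w ∈ E₄, ∃ v ∈ E₁, Matrix.toEuclideanLin Bᵀ v = w := by
    intro w hw
    rw [mem_eig_iff] at hw
    refine ⟨(WithLp.equiv 2 (n → ℝ)).symm ((1 - lam ^ 2)⁻¹ • (B *ᵥ (WithLp.equiv 2 (m → ℝ) w))),
      ?_, ?_⟩
    · rw [mem_eig_iff]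
      simp only [Equiv.apply_symm_apply, Matrix.mulVec_smul]
      rw [L3 h3 hw]
      rw [smul_comm]
    · apply (WithLp.equiv 2 (m → ℝ)).injective
      rw [toEuclideanLin_apply']
      simp only [Equiv.apply_symm_apply, Matrix.mulVec_smul]
      rw [L4 h4 hw, smul_smul, inv_mul_cancel₀ hlam, one_smul]
  have hmapeq : Submodule.map (Matrix.toEuclideanLin Bᵀ) E₁ = E₄ := by
    apply le_antisymm
    · rintro _ ⟨v, hv, rfl⟩; exact hmap v hv
    · intro w hw
      obtain ⟨v, hv, hveq⟩ := hsurj w hw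
      exact ⟨v, hv, hveq⟩
  refine ⟨?_, hmapeq, hinj⟩
  let f : E₁ →ₗ[ℝ] E₄ := (Matrix.toEuclideanLin Bᵀ).restrict hmap
  have hbij : Function.Bijective f := by
    constructor
    · intro ⟨v, hv⟩ ⟨v', hv'⟩ h
      have h' : Matrix.toEuclideanLin Bᵀ (v - v') = 0 := by
        have := congrArg (Subtype.val) h
        simp only [f, LinearMap.restrict_apply] at this
        rw [map_sub, this, sub_self]
      have := hinj (v - v') (E₁.sub_mem hv hv') h'
      ext1; exact sub_eq_zero.mp this
    · intro ⟨w, hw⟩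
      obtain ⟨v, hv, hveq⟩ := hsurj w hw
      exact ⟨⟨v, hv⟩, by ext1; simpa [f, LinearMap.restrict_apply] using hveq⟩
  exact LinearEquiv.finrank_eq (LinearEquiv.ofBijective f hbij)


/-- If `R ∈ SO(p)` is an involution in block form `R = [[R₁, R₂],[R₂ᵀ, R₄]]`
(`R₁` of size `(p−m)×(p−m)`, `R₄` of size `m×m`, `0 < m < p`), then for every
`λ ∈ (−1,1)`: the `λ`-eigenspace of `R₁` and the `(−λ)`-eigenspace of `R₄` have the same
dimension (and vice versa), and `v ↦ R₂ᵀ v` restricts to an isomorphism from the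
`λ`-eigenspace of `R₁` onto the `(−λ)`-eigenspace of `R₄`. -/
theorem involution_block_eigenvalue_pairing (p m : ℕ) (hm : 0 < m) (hmp : m < p)
    (R₁ : Matrix (Fin (p - m)) (Fin (p - m)) ℝ)
    (R₂ : Matrix (Fin (p - m)) (Fin m) ℝ)
    (R₄ : Matrix (Fin m) (Fin m) ℝ)
    (R : Matrix (Fin (p - m) ⊕ Fin m) (Fin (p - m) ⊕ Fin m) ℝ)
    (hR : R = Matrix.fromBlocks R₁ R₂ R₂ᵀ R₄)
    (horth : Rᵀ * R = 1) (hdet : R.det = 1) (hinv : R * R = 1) :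
    ∀ lam : ℝ, lam ∈ Set.Ioo (-1 : ℝ) 1 →
      (Module.finrank ℝ ↥(Module.End.eigenspace (Matrix.toEuclideanLin R₁) lam)
        = Module.finrank ℝ ↥(Module.End.eigenspace (Matrix.toEuclideanLin R₄) (-lam))) ∧
      (Module.finrank ℝ ↥(Module.End.eigenspace (Matrix.toEuclideanLin R₄) lam)
        = Module.finrank ℝ ↥(Module.End.eigenspace (Matrix.toEuclideanLin R₁) (-lam))) ∧
      (Submodule.map (Matrix.toEuclideanLin R₂ᵀ)
          (Module.End.eigenspace (Matrix.toEuclideanLin R₁) lam)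
        = Module.End.eigenspace (Matrix.toEuclideanLin R₄) (-lam)) ∧
      (∀ v ∈ Module.End.eigenspace (Matrix.toEuclideanLin R₁) lam,
          Matrix.toEuclideanLin R₂ᵀ v = 0 → v = 0) := by
  intro lam hlam
  obtain ⟨hl1, hl2⟩ := hlam
  have hne : (1:ℝ) - lam ^ 2 ≠ 0 := by nlinarith
  have hne' : (1:ℝ) - (-lam) ^ 2 ≠ 0 := by rw [neg_pow]; simpa using hne
  have h := hinv
  rw [hR, Matrix.fromBlocks_multiply, ← Matrix.fromBlocks_one] at h
  have h1 : R₁ * R₁ + R₂ * R₂ᵀ = 1 := by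
    have := congrArg Matrix.toBlocks₁₁ h
    simp only [Matrix.toBlocks_fromBlocks₁₁] at this
    exact this
  have h2 : R₂ᵀ * R₁ + R₄ * R₂ᵀ = 0 := by
    have := congrArg Matrix.toBlocks₂₁ h
    simp only [Matrix.toBlocks_fromBlocks₂₁] at this
    exact this
  have h3 : R₁ * R₂ + R₂ * R₄ = 0 := by
    have := congrArg Matrix.toBlocks₁₂ h
    simp only [Matrix.toBlocks_fromBlocks₁₂] at this
    exact this
  have h4 : R₄ * R₄ + R₂ᵀ * R₂ = 1 := by
    have := congrArg Matrix.toBlocks₂₂ h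
    simp only [Matrix.toBlocks_fromBlocks₂₂] at this
    rw [add_comm] at this
    exact this
  obtain ⟨ha1, ha2, ha3⟩ := aux_pairing R₁ R₂ R₄ h1 h2 h3 h4 lam hne
  obtain ⟨hb1, -, -⟩ := aux_pairing R₁ R₂ R₄ h1 h2 h3 h4 (-lam) hne'
  rw [neg_neg] at hb1
  exact ⟨ha1, hb1.symm, ha2, ha3⟩
end

section
/- Let R ∈ SO(p) be an involution and let I_σ be a diagonal matrix with diagonal entries ±1 having exactly m entries equal to −1, with m even and 0 < m < p. Let l₋ = dim(E₁(R) ∩ E_{−1}(I_σ)) and l₊ = dim(E_{−1}(R) ∩ E₁(I_σ)). Then l₋ − l₊ = m − dim(E_{−1}(R)). -/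
/-!
A symmetric involution has its `-1`-eigenspace orthogonal to, and complementary to, its
`1`-eigenspace. Applied to `R` and `I_σ` this gives
`E₁(R) ∩ E₋₁(I_σ) = (E₋₁(R) + E₁(I_σ))ᗮ`, and the Grassmann formula
`dim (U + V) + dim (U ∩ V) = dim U + dim V` then yields
`l₋ = p - dim E₋₁(R) - (p - m) + l₊`.
-/

open Matrix Module End

theorem Submodule.finrank_orthogonal_inf_orthogonal_add
    {𝕜 E : Type*} [RCLike 𝕜] [NormedAddCommGroup E] [InnerProductSpace 𝕜 E]
    [FiniteDimensional 𝕜 E] (U V : Submodule 𝕜 E) :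
    finrank 𝕜 ↥(Uᗮ ⊓ Vᗮ) + finrank 𝕜 U + finrank 𝕜 V = finrank 𝕜 E + finrank 𝕜 ↥(U ⊓ V) := by
  have hsup := Submodule.finrank_sup_add_finrank_inf_eq U V
  have hcompl := (U ⊔ V).finrank_add_finrank_orthogonal
  rw [Submodule.inf_orthogonal]
  omega

namespace LinearMap.IsSymmetric

variable {𝕜 E : Type*} [RCLike 𝕜] [NormedAddCommGroup E] [InnerProductSpace 𝕜 E]
  {T S : E →ₗ[𝕜] E}

theorem eigenspace_neg_one_eq_orthogonal (hT : T.IsSymmetric) (hinv : T * T = 1) :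
    eigenspace T (-1) = (eigenspace T 1)ᗮ := by
  refine le_antisymm (hT.orthogonalFamily_eigenspaces.isOrtho (by norm_num)).le fun x hx => ?_
  have hfix : x + T x ∈ eigenspace T 1 := by
    rw [mem_eigenspace_iff, one_smul, map_add, ← End.mul_apply, hinv, End.one_apply, add_comm]
  have hperp : x + T x ∈ (eigenspace T 1)ᗮ :=
    add_mem hx (hT.invariant_orthogonalComplement_eigenspace 1 x hx)
  have hzero : x + T x = 0 := by
    simpa [Submodule.inf_orthogonal_eq_bot] using Submodule.mem_inf.mpr ⟨hfix, hperp⟩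
  rw [mem_eigenspace_iff, neg_one_smul]
  exact eq_neg_of_add_eq_zero_right hzero

variable [FiniteDimensional 𝕜 E]

theorem eigenspace_one_eq_orthogonal (hT : T.IsSymmetric) (hinv : T * T = 1) :
    eigenspace T 1 = (eigenspace T (-1))ᗮ := by
  rw [hT.eigenspace_neg_one_eq_orthogonal hinv, Submodule.orthogonal_orthogonal]

theorem finrank_eigenspace_one_add_finrank_eigenspace_neg_one (hT : T.IsSymmetric)
    (hinv : T * T = 1) :
    finrank 𝕜 (eigenspace T 1) + finrank 𝕜 (eigenspace T (-1)) = finrank 𝕜 E := by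
  rw [hT.eigenspace_neg_one_eq_orthogonal hinv, Submodule.finrank_add_finrank_orthogonal]

theorem finrank_eigenspace_one_inf_neg_one_add (hT : T.IsSymmetric) (hS : S.IsSymmetric)
    (hTinv : T * T = 1) (hSinv : S * S = 1) :
    finrank 𝕜 ↥(eigenspace T 1 ⊓ eigenspace S (-1)) + finrank 𝕜 (eigenspace T (-1)) +
        finrank 𝕜 (eigenspace S 1) =
      finrank 𝕜 E + finrank 𝕜 ↥(eigenspace T (-1) ⊓ eigenspace S 1) := by
  rw [hT.eigenspace_one_eq_orthogonal hTinv, hS.eigenspace_neg_one_eq_orthogonal hSinv]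
  exact Submodule.finrank_orthogonal_inf_orthogonal_add _ _

end LinearMap.IsSymmetric

theorem Matrix.finrank_eigenspace_toEuclideanLin_diagonal {𝕜 ι : Type*} [RCLike 𝕜] [Fintype ι]
    [DecidableEq ι] (w : ι → 𝕜) (μ : 𝕜) :
    finrank 𝕜 (eigenspace (toEuclideanLin (diagonal w)) μ) = Fintype.card {i // w i = μ} := by
  have heq : eigenspace (toEuclideanLin (diagonal w)) μ =
      (⨅ i ∈ {i | w i ≠ μ}, LinearMap.ker (LinearMap.proj i)).comap
        (WithLp.linearEquiv 2 𝕜 (ι → 𝕜)).toLinearMap := by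
    ext x
    simp [WithLp.ext_iff, funext_iff, mulVec_diagonal, or_iff_not_imp_left]
  rw [heq, Submodule.comap_equiv_eq_map_symm, LinearEquiv.finrank_map_eq,
    (LinearMap.iInfKerProjEquiv 𝕜 (fun _ : ι => 𝕜) (I := {i | w i = μ}) _ _).finrank_eq]
  · simp [Fintype.card_subtype]
  · exact Set.disjoint_left.mpr fun _ h h' => h' h
  · exact fun i _ => em (w i = μ)

theorem Matrix.toEuclideanLin_mul_self_eq_one {𝕜 n : Type*} [RCLike 𝕜] [Fintype n]
    [DecidableEq n] {A : Matrix n n 𝕜} (hA : A * A = 1) :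
    toEuclideanLin A * toEuclideanLin A = 1 := by
  rw [mul_eq_comp, ← toLpLin_mul_same, hA, toLpLin_one]
  rfl

theorem sign_change_eigenspace_dim_relation_general (p m : ℕ)
    (R : Matrix (Fin p) (Fin p) ℝ)
    (horth : Rᵀ * R = 1) (hinv : R * R = 1)
    (σ : Fin p → ℝ) (hσ : ∀ i, σ i = 1 ∨ σ i = -1)
    (hcard : (Finset.univ.filter (fun i => σ i = -1)).card = m) :
    (Module.finrank ℝ ↥(Module.End.eigenspace (Matrix.toEuclideanLin R) 1 ⊓
        Module.End.eigenspace (Matrix.toEuclideanLin (Matrix.diagonal σ)) (-1)) : ℤ)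
      - (Module.finrank ℝ ↥(Module.End.eigenspace (Matrix.toEuclideanLin R) (-1) ⊓
          Module.End.eigenspace (Matrix.toEuclideanLin (Matrix.diagonal σ)) 1) : ℤ)
      = (m : ℤ) - (Module.finrank ℝ
          ↥(Module.End.eigenspace (Matrix.toEuclideanLin R) (-1)) : ℤ) := by
  have hRsymm : Rᵀ = R := by rw [← mul_one Rᵀ, ← hinv, ← mul_assoc, horth, one_mul]
  have hT : (toEuclideanLin R).IsSymmetric :=
    isSymmetric_toEuclideanLin_iff.mpr (isHermitian_iff_isSymm.mpr hRsymm)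
  have hS : (toEuclideanLin (diagonal σ)).IsSymmetric :=
    isSymmetric_toEuclideanLin_iff.mpr (isHermitian_diagonal σ)
  have hσsq : diagonal σ * diagonal σ = 1 := by
    rw [diagonal_mul_diagonal, ← diagonal_one]
    congr 1
    ext i
    rcases hσ i with h | h <;> simp [h]
  have hcount := hT.finrank_eigenspace_one_inf_neg_one_add hS
    (toEuclideanLin_mul_self_eq_one hinv) (toEuclideanLin_mul_self_eq_one hσsq)
  have hSdim := hS.finrank_eigenspace_one_add_finrank_eigenspace_neg_one
    (toEuclideanLin_mul_self_eq_one hσsq)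
  have hm : finrank ℝ (eigenspace (toEuclideanLin (diagonal σ)) (-1)) = m := by
    rw [finrank_eigenspace_toEuclideanLin_diagonal, ← hcard, Fintype.card_subtype]
  rw [finrank_euclideanSpace_fin] at hcount hSdim
  omega

/-- Let `R ∈ SO(p)` be an involution and `I_σ` a diagonal sign matrix with exactly `m`
entries equal to `−1`, `m` even, `0 < m < p`.  With
`l₋ = dim(E₁(R) ∩ E_{−1}(I_σ))` and `l₊ = dim(E_{−1}(R) ∩ E₁(I_σ))`, one has
`l₋ − l₊ = m − dim E_{−1}(R)`. -/
theorem sign_change_eigenspace_dim_relation (p m : ℕ) (hm : 0 < m) (hmp : m < p)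
    (hmeven : Even m)
    (R : Matrix (Fin p) (Fin p) ℝ)
    (horth : Rᵀ * R = 1) (hdet : R.det = 1) (hinv : R * R = 1)
    (σ : Fin p → ℝ) (hσ : ∀ i, σ i = 1 ∨ σ i = -1)
    (hcard : (Finset.univ.filter (fun i => σ i = -1)).card = m) :
    (Module.finrank ℝ ↥(Module.End.eigenspace (Matrix.toEuclideanLin R) 1 ⊓
        Module.End.eigenspace (Matrix.toEuclideanLin (Matrix.diagonal σ)) (-1)) : ℤ)
      - (Module.finrank ℝ ↥(Module.End.eigenspace (Matrix.toEuclideanLin R) (-1) ⊓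
          Module.End.eigenspace (Matrix.toEuclideanLin (Matrix.diagonal σ)) 1) : ℤ)
      = (m : ℤ) - (Module.finrank ℝ
          ↥(Module.End.eigenspace (Matrix.toEuclideanLin R) (-1)) : ℤ) :=
  sign_change_eigenspace_dim_relation_general p m R horth hinv σ hσ hcard
end

section
/- Let c > 0 and p ≥ 2. Then there exist diagonal matrices D, Λ with positive diagonal entries, all diagonal entries of D distinct and all diagonal entries of Λ distinct, such that for every non-identity permutation π of {1,…,p}, ‖log(D^{−1}·(π·Λ))‖² > ‖log(D^{−1}Λ)‖² + c, where π·Λ permutes the diagonal entries of Λ by π and ‖·‖ is the Frobenius norm. -/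
open Matrix

/-- For any `c > 0` and `p ≥ 2`, there exist diagonal matrices `D = diagonal d`,
`Λ = diagonal l` with positive, pairwise-distinct diagonal entries such that for every
non-identity permutation `π` of `{1,…,p}`,
`‖log(D⁻¹·(π·Λ))‖² > ‖log(D⁻¹Λ)‖² + c` (Frobenius norm). -/
theorem exists_diag_gap (p : ℕ) (hp : 2 ≤ p) (c : ℝ) (hc : 0 < c) :
    ∃ d l : Fin p → ℝ,
      (∀ i, 0 < d i) ∧ (∀ i, 0 < l i) ∧
      Function.Injective d ∧ Function.Injective l ∧
      ∀ π : Equiv.Perm (Fin p), π ≠ 1 →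
        Matrix.trace ((Matrix.diagonal (fun i => Real.log (l (π.symm i) / d i)))ᵀ *
            Matrix.diagonal (fun i => Real.log (l (π.symm i) / d i)))
          > Matrix.trace ((Matrix.diagonal (fun i => Real.log (l i / d i)))ᵀ *
              Matrix.diagonal (fun i => Real.log (l i / d i))) + c := by
  set M : ℝ := Real.sqrt c + 1 with hMdef
  have hM0 : 0 < M := by positivity
  have hMc : c < M ^ 2 := by
    have h1 := Real.sq_sqrt hc.le
    have h2 := Real.sqrt_nonneg c
    nlinarith
  have hinj : Function.Injective (fun i : Fin p => Real.exp (M * i)) := by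
    intro a b h
    have h2 : M * (a : ℝ) = M * (b : ℝ) := Real.exp_eq_exp.mp h
    have h3 : (a : ℝ) = (b : ℝ) := mul_left_cancel₀ hM0.ne' h2
    have h4 : (a.val : ℝ) = (b.val : ℝ) := by exact_mod_cast h3
    exact Fin.ext (by exact_mod_cast h4)
  refine ⟨fun i => Real.exp (M * i), fun i => Real.exp (M * i),
    fun i => Real.exp_pos _, fun i => Real.exp_pos _, hinj, hinj, ?_⟩
  intro π hπ
  have hlog : ∀ j i : Fin p,
      Real.log (Real.exp (M * j) / Real.exp (M * i)) = M * j - M * i := by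
    intro j i
    rw [Real.log_div (Real.exp_ne_zero _) (Real.exp_ne_zero _), Real.log_exp, Real.log_exp]
  simp only [Matrix.diagonal_transpose, Matrix.diagonal_mul_diagonal,
    Matrix.trace_diagonal, hlog, sub_self, mul_zero, Finset.sum_const_zero, zero_add]
  -- find a moved point
  have hex : ∃ j : Fin p, π.symm j ≠ j := by
    by_contra h
    push_neg at h
    apply hπ
    apply Equiv.ext
    intro x
    have h2 := h (π x)
    rw [Equiv.symm_apply_apply] at h2
    show π x = x
    exact h2.symm
  obtain ⟨j, hj⟩ := hex
  have hzkey : 1 ≤ ((π.symm j : ℝ) - (j : ℝ)) ^ 2 := by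
    have hne : ((π.symm j).val : ℤ) - (j.val : ℤ) ≠ 0 := by
      intro h
      apply hj
      apply Fin.ext
      omega
    have habs := Int.one_le_abs hne
    have h1 : (1 : ℤ) ≤ (((π.symm j).val : ℤ) - (j.val : ℤ)) ^ 2 := by
      nlinarith [sq_abs (((π.symm j).val : ℤ) - (j.val : ℤ))]
    have h2 : ((π.symm j : ℝ) - (j : ℝ)) ^ 2
        = (((((π.symm j).val : ℤ) - (j.val : ℤ)) : ℤ) : ℝ) ^ 2 := by
      push_cast
      ring
    rw [h2]
    exact_mod_cast h1
  have hterm : M ^ 2 ≤ (M * (π.symm j : ℝ) - M * (j : ℝ)) * (M * (π.symm j : ℝ) - M * (j : ℝ)) := by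
    have : (M * (π.symm j : ℝ) - M * (j : ℝ)) * (M * (π.symm j : ℝ) - M * (j : ℝ))
        = M ^ 2 * ((π.symm j : ℝ) - (j : ℝ)) ^ 2 := by ring
    rw [this]
    nlinarith [sq_nonneg M]
  have hsum : (M * (π.symm j : ℝ) - M * (j : ℝ)) * (M * (π.symm j : ℝ) - M * (j : ℝ))
      ≤ ∑ i : Fin p, (M * (π.symm i : ℝ) - M * (i : ℝ)) * (M * (π.symm i : ℝ) - M * (i : ℝ)) := by
    exact Finset.single_le_sum (f := fun i : Fin p => (M * (π.symm i : ℝ) - M * (i : ℝ)) * (M * (π.symm i : ℝ) - M * (i : ℝ))) (fun i _ => mul_self_nonneg _) (Finset.mem_univ j)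
  linarith
end

section
/- Let p ≥ 4 be even, p = 2k, and let W_p be the 2-plane in R^p spanned by v̂ = (1/√k)·Σ_{i=1}^{k} e_i and ŵ = (1/√k)·Σ_{i=k+1}^{2k} e_i. For a 2-element subset J = {i,j} with i < j ≤ k or k < i < j, the principal angles between W_p and R^J are π/2 and arccos√(4/p); for i ≤ k < j, both principal angles equal arccos√(2/p). -/
open Matrix Real Polynomial

/-!
The rows of `W̃ᵀ E_J` are the restrictions `(v̂ᵢ, v̂ⱼ)` and `(ŵᵢ, ŵⱼ)` of `v̂` and `ŵ` to `J`.
Since `v̂` and `ŵ` have disjoint supports these rows are orthogonal, so the Gram matrix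
`(W̃ᵀ E_J)(W̃ᵀ E_J)ᵀ` is diagonal with the squared row lengths on the diagonal: `2/k` and `0` when
`J` lies in one block, `1/k` twice when `J` meets both.
-/

theorem Real.cos_arccos_sqrt_sq {x : ℝ} (h0 : 0 ≤ x) (h1 : x ≤ 1) :
    cos (arccos √x) ^ 2 = x := by
  rw [cos_arccos (by linarith [sqrt_nonneg x]) (sqrt_le_one.mpr h1), sq_sqrt h0]

theorem Matrix.mul_transpose_eq_diagonal_of_dotProduct_eq_zero {n R : Type*} [Fintype n]
    [CommSemiring R] (M : Matrix (Fin 2) n R) (h : M 0 ⬝ᵥ M 1 = 0) :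
    M * Mᵀ = diagonal ![M 0 ⬝ᵥ M 0, M 1 ⬝ᵥ M 1] := by
  ext s t
  fin_cases s <;> fin_cases t <;> simp [mul_apply', h, dotProduct_comm (M 1) (M 0)]

theorem Matrix.charpoly_mul_transpose_of_dotProduct_eq_zero {n R : Type*} [Fintype n]
    [CommRing R] (M : Matrix (Fin 2) n R) (h : M 0 ⬝ᵥ M 1 = 0) :
    (M * Mᵀ).charpoly = (X - C (M 0 ⬝ᵥ M 0)) * (X - C (M 1 ⬝ᵥ M 1)) := by
  rw [mul_transpose_eq_diagonal_of_dotProduct_eq_zero M h, charpoly_diagonal, Fin.prod_univ_two]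
  rfl

/-- Let `p = 2k ≥ 4` and let `W_p ⊂ ℝ^p` be the 2-plane spanned by
`v̂ = (1/√k)·(e₁+…+e_k)` and `ŵ = (1/√k)·(e_{k+1}+…+e_{2k})`.  For a coordinate 2-plane
`ℝ^J`, `J = {i,j}` with `i < j`, the principal angles `φ₁, φ₂ ∈ [0,π/2]` between `W_p`
and `ℝ^J` (encoded via `cos²φ₁, cos²φ₂` being the eigenvalues of `(W̃ᵀE_J)(W̃ᵀE_J)ᵀ`) are:
`π/2` and `arccos √(4/p)` if `i < j ≤ k` or `k < i < j` (Case I), and both equal to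
`arccos √(2/p)` if `i ≤ k < j` (Case II). -/
theorem principal_angles_of_Wp (k : ℕ) (hk : 2 ≤ k)
    (vhat what : Fin (2 * k) → ℝ)
    (hv : vhat = fun a : Fin (2 * k) => if (a : ℕ) < k then 1 / Real.sqrt k else 0)
    (hw : what = fun a : Fin (2 * k) => if k ≤ (a : ℕ) then 1 / Real.sqrt k else 0)
    (W : Matrix (Fin (2 * k)) (Fin 2) ℝ)
    (hW : W = fun a t => if t = 0 then vhat a else what a)
    (i j : Fin (2 * k)) (hij : i < j)
    (E : Matrix (Fin (2 * k)) (Fin 2) ℝ)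
    (hE : E = fun a t => if t = 0 then (if a = i then 1 else 0)
      else (if a = j then 1 else 0)) :
    (((j : ℕ) < k ∨ k ≤ (i : ℕ)) →
      Matrix.charpoly ((Wᵀ * E) * (Wᵀ * E)ᵀ)
        = (X - C ((Real.cos (π / 2)) ^ 2)) *
            (X - C ((Real.cos (Real.arccos (Real.sqrt (4 / (2 * k : ℕ))))) ^ 2))) ∧
    (((i : ℕ) < k ∧ k ≤ (j : ℕ)) →
      Matrix.charpoly ((Wᵀ * E) * (Wᵀ * E)ᵀ)
        = (X - C ((Real.cos (Real.arccos (Real.sqrt (2 / (2 * k : ℕ))))) ^ 2)) ^ 2) := by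
  have hE' : E = (1 : Matrix (Fin (2 * k)) (Fin (2 * k)) ℝ).submatrix id ![i, j] := by
    subst hE; ext a t; fin_cases t <;> simp [one_apply, eq_comm]
  have hWE : Wᵀ * E = !![vhat i, vhat j; what i, what j] := by
    rw [hE', ← Equiv.coe_refl, mul_submatrix_one, hW]
    ext s t; fin_cases s <;> fin_cases t <;> rfl
  have hdisj : ∀ a, vhat a * what a = 0 := by
    intro a; rw [hv, hw]; dsimp only; split_ifs <;> first | (exfalso; omega) | simp
  rw [hWE, charpoly_mul_transpose_of_dotProduct_eq_zero _ (by simp [vec2_dotProduct, hdisj])]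
  simp only [of_apply, cons_val_zero, cons_val_one, vec2_dotProduct]
  have hk0 : (0 : ℝ) < k := by positivity
  have hc : 1 / √(k : ℝ) * (1 / √(k : ℝ)) = 2 / ((2 * k : ℕ) : ℝ) := by
    rw [← sq, div_pow, sq_sqrt hk0.le]; push_cast; field_simp
  have h4 : (4 : ℝ) / ((2 * k : ℕ) : ℝ) ≤ 1 := by
    rw [div_le_one (by positivity)]; push_cast; exact_mod_cast (by omega : 4 ≤ 2 * k)
  refine ⟨fun hI => ?_, fun ⟨hik, hjk⟩ => ?_⟩
  · rw [cos_pi_div_two, cos_arccos_sqrt_sq (by positivity) h4]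
    rcases hI with hjk | hki
    · have hik : (i : ℕ) < k := lt_trans hij hjk
      simp only [hv, hw, hik, hjk, if_true, not_le.mpr hik, not_le.mpr hjk, if_false, hc]
      rw [mul_comm]
      congr 3 <;> ring
    · have hkj : k ≤ (j : ℕ) := hki.trans hij.le
      simp only [hv, hw, hki, hkj, if_true, not_lt.mpr hki, not_lt.mpr hkj, if_false, hc]
      congr 3 <;> ring
  · rw [cos_arccos_sqrt_sq (by positivity) (h4.trans' (by gcongr; norm_num))]
    simp only [hv, hw, hik, hjk, if_true, not_le.mpr hik, not_lt.mpr hjk, if_false, hc]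
    rw [sq]
    congr 3 <;> ring
end
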